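/- Fix real numbers A₀, B₀ with 0 < B₀ < A₀ < 1 and A₀² − 2B₀² > 0, a natural number n, real numbers A₁,…,A_n, B₁,…,B_n ∈ [0,1] with 3·Σ_{k=1}^{n}(A_k² + B_k²) < A₀² − 2B₀², and σ_n² > 0. With a priori probabilities π₀ = π₁ = 1/2, define for Q > 0: σ_I²(Q) = (1/4)Q²·Σ_{k=1}^{n}(A_k² + B_k²) + (1/2)Q·Σ_{k=1}^{n}(A_k(1−A_k) + B_k(1−B_k)) + σ_n²; σ_ex0²(Q) = (1/2)·B₀(1−B₀)/(A₀²Q) + (1/4)·B₀²/A₀² + σ_I²(Q)/(Q²A₀²); σ_in0²(Q) = (A₀/(A₀²−B₀²))²·(1/2)·B₀(1−B₀)/Q + (B₀/(A₀²−B₀²))²·(1/2)·A₀(1−A₀)/Q + ((A₀²+B₀²)/(Q²(A₀²−B₀²)²))·σ_I²(Q); and h(Q) = Q²·(σ_ex0²(Q) − σ_in0²(Q)). Then h extends to a quadratic polynomial a·Q² + b·Q + c in Q with a > 0 and c < 0, and h has exactly one positive root: there exists a unique Q > 0 with h(Q) = 0. -/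

import Mathlib

open Finset

/-- Mean interference power `σ_I²(Q)` with a priori probabilities `π₀ = π₁ = 1/2`. -/
noncomputable def sigmaI2 (n : ℕ) (A B : ℕ → ℝ) (σn2 Q : ℝ) : ℝ :=
  (1 / 4) * Q ^ 2 * (∑ k ∈ Finset.Icc 1 n, ((A k) ^ 2 + (B k) ^ 2)) +
    (1 / 2) * Q * (∑ k ∈ Finset.Icc 1 n, (A k * (1 - A k) + B k * (1 - B k))) + σn2

/-- Variance `σ_ex0²(Q)` of the practical ZF detector output (channel matrix excluding
ILI) under transmitted bit-0. -/
noncomputable def sigmaEx0sq (A₀ B₀ : ℝ) (n : ℕ) (A B : ℕ → ℝ) (σn2 Q : ℝ) : ℝ :=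
  (1 / 2) * (B₀ * (1 - B₀)) / (A₀ ^ 2 * Q) + (1 / 4) * B₀ ^ 2 / A₀ ^ 2 +
    sigmaI2 n A B σn2 Q / (Q ^ 2 * A₀ ^ 2)

/-- Variance `σ_in0²(Q)` of the practical ZF detector output (channel matrix including
ILI) under transmitted bit-0. -/
noncomputable def sigmaIn0sq (A₀ B₀ : ℝ) (n : ℕ) (A B : ℕ → ℝ) (σn2 Q : ℝ) : ℝ :=
  (A₀ / (A₀ ^ 2 - B₀ ^ 2)) ^ 2 * ((1 / 2) * (B₀ * (1 - B₀)) / Q) +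
    (B₀ / (A₀ ^ 2 - B₀ ^ 2)) ^ 2 * ((1 / 2) * (A₀ * (1 - A₀)) / Q) +
    ((A₀ ^ 2 + B₀ ^ 2) / (Q ^ 2 * (A₀ ^ 2 - B₀ ^ 2) ^ 2)) * sigmaI2 n A B σn2 Q

/-- The difference function `h(Q) = Q²·(σ_ex0²(Q) − σ_in0²(Q))`. -/
noncomputable def hDiff (A₀ B₀ : ℝ) (n : ℕ) (A B : ℕ → ℝ) (σn2 Q : ℝ) : ℝ :=
  Q ^ 2 * (sigmaEx0sq A₀ B₀ n A B σn2 Q - sigmaIn0sq A₀ B₀ n A B σn2 Q)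


/-!
Multiplied by `Q²`, every term of `σ_ex0²(Q) − σ_in0²(Q)` is a polynomial of degree at most two in
`Q`, and `σ_I²(Q)` enters with the coefficient `κ = B₀²(B₀² − 3A₀²) / (A₀²(A₀² − B₀²)²) < 0`.
So `h` has constant term `κ σ_n² < 0`, and its leading coefficient is positive exactly when
`(A₀² − B₀²)² > S (3A₀² − B₀²)` with `S = Σ (A_k² + B_k²)`, which `3S < A₀² − 2B₀²` guarantees.
A real quadratic with positive leading and negative constant coefficient has exactly one positive
root, since the product of its roots is negative.
-/

theorem existsUnique_pos_root_of_pos_of_neg {a b c : ℝ} (ha : 0 < a) (hc : c < 0) :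
    ∃! x : ℝ, 0 < x ∧ a * x ^ 2 + b * x + c = 0 := by
  have hdisc : b ^ 2 < b ^ 2 - 4 * a * c := by nlinarith
  set s := Real.sqrt (b ^ 2 - 4 * a * c)
  have hs : s ^ 2 = b ^ 2 - 4 * a * c := Real.sq_sqrt ((sq_nonneg b).trans hdisc.le)
  have hbs : b < s := Real.lt_sqrt_of_sq_lt hdisc
  set x₀ := (s - b) / (2 * a)
  have hx₀ : 0 < x₀ := div_pos (sub_pos.2 hbs) (by linarith)
  have hx₀_root : a * x₀ ^ 2 + b * x₀ + c = 0 := by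
    simp only [x₀]
    field_simp
    linear_combination hs
  refine ⟨x₀, ⟨hx₀, hx₀_root⟩, fun y ⟨hy, hy_root⟩ => ?_⟩
  have hfactor : (y - x₀) * (a * y * x₀ - c) = 0 := by
    linear_combination x₀ * hy_root - y * hx₀_root
  have : 0 < a * y * x₀ - c := by nlinarith [mul_pos (mul_pos ha hy) hx₀]
  linarith [(mul_eq_zero.1 hfactor).resolve_right this.ne']

/-- The coefficient of `σ_I²(Q) / Q²` in `σ_ex0²(Q) − σ_in0²(Q)`. -/
noncomputable def interferenceGap (A₀ B₀ : ℝ) : ℝ :=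
  1 / A₀ ^ 2 - (A₀ ^ 2 + B₀ ^ 2) / (A₀ ^ 2 - B₀ ^ 2) ^ 2

theorem interferenceGap_eq {A₀ B₀ : ℝ} (hA₀ : A₀ ≠ 0) (hBA : A₀ ^ 2 ≠ B₀ ^ 2) :
    interferenceGap A₀ B₀ = B₀ ^ 2 * (B₀ ^ 2 - 3 * A₀ ^ 2) / (A₀ ^ 2 * (A₀ ^ 2 - B₀ ^ 2) ^ 2) := by
  have := sub_ne_zero.2 hBA
  unfold interferenceGap
  field_simp
  ring

theorem interferenceGap_neg {A₀ B₀ : ℝ} (hB₀ : B₀ ≠ 0) (hBA : B₀ ^ 2 < A₀ ^ 2) :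
    interferenceGap A₀ B₀ < 0 := by
  have hA₀ : A₀ ≠ 0 := by rintro rfl; nlinarith [sq_nonneg B₀]
  rw [interferenceGap_eq hA₀ hBA.ne']
  refine div_neg_of_neg_of_pos (mul_neg_of_pos_of_neg (by positivity) (by nlinarith)) ?_
  have : 0 < A₀ ^ 2 - B₀ ^ 2 := by linarith
  positivity

theorem exists_hDiff_eq (A₀ B₀ : ℝ) (hA₀ : A₀ ≠ 0) (hBA : A₀ ^ 2 ≠ B₀ ^ 2) (n : ℕ) (A B : ℕ → ℝ)
    (σn2 : ℝ) : ∃ b : ℝ, ∀ Q : ℝ, Q ≠ 0 →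
      hDiff A₀ B₀ n A B σn2 Q = B₀ ^ 2 / (4 * A₀ ^ 2) * Q ^ 2 + b * Q +
        interferenceGap A₀ B₀ * sigmaI2 n A B σn2 Q := by
  have := sub_ne_zero.2 hBA
  refine ⟨B₀ * (1 - B₀) / 2 * (1 / A₀ ^ 2 - A₀ ^ 2 / (A₀ ^ 2 - B₀ ^ 2) ^ 2)
    - A₀ * (1 - A₀) * B₀ ^ 2 / (2 * (A₀ ^ 2 - B₀ ^ 2) ^ 2), fun Q hQ => ?_⟩
  unfold hDiff sigmaEx0sq sigmaIn0sq interferenceGap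
  field_simp
  ring

theorem hDiff_leadingCoeff_pos {A₀ B₀ S : ℝ} (hB₀ : B₀ ≠ 0) (hBA : B₀ ^ 2 < A₀ ^ 2)
    (hS : 3 * S < A₀ ^ 2 - 2 * B₀ ^ 2) :
    0 < B₀ ^ 2 / (4 * A₀ ^ 2) + interferenceGap A₀ B₀ * S / 4 := by
  have hA₀ : A₀ ≠ 0 := by rintro rfl; nlinarith [sq_nonneg B₀]
  have hD : 0 < A₀ ^ 2 - B₀ ^ 2 := by linarith
  have hkey : S * (3 * A₀ ^ 2 - B₀ ^ 2) < (A₀ ^ 2 - B₀ ^ 2) ^ 2 := by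
    nlinarith [mul_pos (by positivity : 0 < B₀ ^ 2) (by positivity : 0 < A₀ ^ 2 + B₀ ^ 2)]
  have : B₀ ^ 2 / (4 * A₀ ^ 2) + interferenceGap A₀ B₀ * S / 4
      = B₀ ^ 2 * ((A₀ ^ 2 - B₀ ^ 2) ^ 2 - S * (3 * A₀ ^ 2 - B₀ ^ 2))
        / (4 * A₀ ^ 2 * (A₀ ^ 2 - B₀ ^ 2) ^ 2) := by
    rw [interferenceGap_eq hA₀ hBA.ne']
    field_simp
    ring
  rw [this]
  have : 0 < (A₀ ^ 2 - B₀ ^ 2) ^ 2 - S * (3 * A₀ ^ 2 - B₀ ^ 2) := by linarith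
  positivity

theorem hDiff_quadratic_single_positive_root_general
    (A₀ B₀ : ℝ) (hB : 0 < B₀) (hBA : B₀ < A₀)
    (n : ℕ) (A B : ℕ → ℝ)
    (hISI : 3 * ∑ k ∈ Finset.Icc 1 n, ((A k) ^ 2 + (B k) ^ 2) < A₀ ^ 2 - 2 * B₀ ^ 2)
    (σn2 : ℝ) (hσ : 0 < σn2) :
    (∃ a b c : ℝ, 0 < a ∧ c < 0 ∧
      ∀ Q : ℝ, 0 < Q → hDiff A₀ B₀ n A B σn2 Q = a * Q ^ 2 + b * Q + c) ∧
    (∃! Q : ℝ, 0 < Q ∧ hDiff A₀ B₀ n A B σn2 Q = 0) := by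
  have hBA2 : B₀ ^ 2 < A₀ ^ 2 := by gcongr
  obtain ⟨b₀, hb₀⟩ := exists_hDiff_eq A₀ B₀ (hB.trans hBA).ne' hBA2.ne' n A B σn2
  have hcoeffs : ∃ a b c : ℝ, 0 < a ∧ c < 0 ∧
      ∀ Q : ℝ, 0 < Q → hDiff A₀ B₀ n A B σn2 Q = a * Q ^ 2 + b * Q + c := by
    refine ⟨_,
      b₀ + interferenceGap A₀ B₀ * (∑ k ∈ Icc 1 n, (A k * (1 - A k) + B k * (1 - B k))) / 2, _,
      hDiff_leadingCoeff_pos hB.ne' hBA2 hISI,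
      mul_neg_of_neg_of_pos (interferenceGap_neg hB.ne' hBA2) hσ, fun Q hQ => ?_⟩
    rw [hb₀ Q hQ.ne', sigmaI2]
    ring
  refine ⟨hcoeffs, ?_⟩
  obtain ⟨a, b, c, ha, hc, hquad⟩ := hcoeffs
  refine (existsUnique_congr fun Q => and_congr_right fun hQ => ?_).2
    (existsUnique_pos_root_of_pos_of_neg (b := b) ha hc)
  rw [hquad Q hQ]

/-- **Theorem 2 of the paper.** Under acceptable interference
(`A₀² − 2B₀² > 0` and `3·∑(A_k² + B_k²) < A₀² − 2B₀²`) and `π₀ = π₁ = 1/2`, the function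
`h(Q) = Q²(σ_ex0²(Q) − σ_in0²(Q))` extends to a quadratic `aQ² + bQ + c` with `a > 0`
and `c < 0`, and has exactly one positive root. -/
theorem hDiff_quadratic_single_positive_root
    (A₀ B₀ : ℝ) (hB : 0 < B₀) (hBA : B₀ < A₀) (hA1 : A₀ < 1)
    (hILI : 0 < A₀ ^ 2 - 2 * B₀ ^ 2)
    (n : ℕ) (A B : ℕ → ℝ)
    (hA : ∀ k ∈ Finset.Icc 1 n, A k ∈ Set.Icc (0 : ℝ) 1)
    (hBk : ∀ k ∈ Finset.Icc 1 n, B k ∈ Set.Icc (0 : ℝ) 1)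
    (hISI : 3 * ∑ k ∈ Finset.Icc 1 n, ((A k) ^ 2 + (B k) ^ 2) < A₀ ^ 2 - 2 * B₀ ^ 2)
    (σn2 : ℝ) (hσ : 0 < σn2) :
    (∃ a b c : ℝ, 0 < a ∧ c < 0 ∧
      ∀ Q : ℝ, 0 < Q → hDiff A₀ B₀ n A B σn2 Q = a * Q ^ 2 + b * Q + c) ∧
    (∃! Q : ℝ, 0 < Q ∧ hDiff A₀ B₀ n A B σn2 Q = 0) :=
  hDiff_quadratic_single_positive_root_general A₀ B₀ hB hBA n A B hISI σn2 hσ
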